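/- arXiv:q-alg/9609032 — 6 statements merged into one kernel-verified Lean document; each statement's English description precedes it below -/
import Mathlib

section
/- For real a, b ≥ 0 with a + b > 0 and any nonzero real y, the limit as β → 0⁺ of |β^a · Γ(a + b + iy/β) / Γ(b + iy/β)| equals |y|^a. -/
/-!
By Gauss's product `Γ(s) = lim n^s n! / ∏_{j ≤ n} (s + j)`, for `s = c + ix` the quantity
`2 log ‖Γ(s + a) / Γ(s)‖ - a log ‖s‖²` is the limit of the partial sums of
`a (log ‖s + j + 1‖² - log ‖s + j‖²) - (log ‖s + j + a‖² - log ‖s + j‖²)`.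
Expanding `log (1 + h) = h + O(h²)`, the first-order parts of a term cancel up to
`a (1 - a) / ‖s + j‖²`, so the whole sum is `O(∑ⱼ 1 / (j² + x²))`, which tends to `0` as
`|x| → ∞`. Hence `‖Γ(s + a) / Γ(s)‖ ~ ‖s‖ ^ a`, and for `x = y / β` the prefactor turns
`β ^ a ‖s‖ ^ a` into `‖β b + i y‖ ^ a → |y| ^ a`.
-/

open Filter Topology Bornology Complex

lemma Real.abs_log_one_add_sub_le {h : ℝ} (hh : 0 ≤ h) : |Real.log (1 + h) - h| ≤ h ^ 2 / 2 := by
  have upper : Real.log (1 + h) ≤ h := by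
    linarith [log_le_sub_one_of_pos (x := 1 + h) (by linarith)]
  have lower : h - h ^ 2 / 2 ≤ Real.log (1 + h) := by
    refine le_trans ?_ (le_log_one_add_of_nonneg hh)
    rw [le_div_iff₀ (by linarith)]
    nlinarith [pow_nonneg hh 3]
  rw [abs_le]
  constructor <;> nlinarith

lemma abs_log_add_sq_add_sub_le {u d x : ℝ} (hu : 0 ≤ u) (hd : 0 ≤ d) (hx : 1 ≤ x ^ 2) :
    |Real.log ((u + d) ^ 2 + x ^ 2) - Real.log (u ^ 2 + x ^ 2) - d * (2 * u + d) / (u ^ 2 + x ^ 2)|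
      ≤ d ^ 2 * (4 + d ^ 2) / (u ^ 2 + x ^ 2) := by
  set s := u ^ 2 + x ^ 2
  set h := d * (2 * u + d) / s
  have hs : 1 ≤ s := le_add_of_nonneg_of_le (sq_nonneg u) hx
  have hh : 0 ≤ h := by positivity
  have hsplit : (u + d) ^ 2 + x ^ 2 = s * (1 + h) := by
    simp only [h, s]; field_simp; ring
  have hh2 : h ^ 2 / 2 ≤ d ^ 2 * (4 + d ^ 2) / s := by
    have : (2 * u + d) ^ 2 ≤ (8 + 2 * d ^ 2) * s := by nlinarith [sq_nonneg (2 * u - d)]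
    rw [div_pow, div_div, div_le_div_iff₀ (by positivity) (by positivity)]
    calc (d * (2 * u + d)) ^ 2 * s = d ^ 2 * (2 * u + d) ^ 2 * s := by ring
      _ ≤ d ^ 2 * ((8 + 2 * d ^ 2) * s) * s := by gcongr
      _ = d ^ 2 * (4 + d ^ 2) * (s ^ 2 * 2) := by ring
  rw [hsplit, Real.log_mul (by positivity) (by positivity), add_sub_cancel_left]
  exact (Real.abs_log_one_add_sub_le hh).trans hh2

/-- The term at `u = c + j` of the telescoped Gauss-product series for
`2 log ‖Γ(s + a) / Γ(s)‖ - a log ‖s‖²`, `s = c + ix`. -/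
noncomputable def gammaRatioLogTerm (a x u : ℝ) : ℝ :=
  a * (Real.log ((u + 1) ^ 2 + x ^ 2) - Real.log (u ^ 2 + x ^ 2))
    - (Real.log ((u + a) ^ 2 + x ^ 2) - Real.log (u ^ 2 + x ^ 2))

lemma abs_gammaRatioLogTerm_le {a u x : ℝ} (ha : 0 ≤ a) (hu : 0 ≤ u) (hx : 1 ≤ x ^ 2) :
    |gammaRatioLogTerm a x u| ≤ (a ^ 4 + 5 * a ^ 2 + 6 * a) / (u ^ 2 + x ^ 2) := by
  unfold gammaRatioLogTerm
  set s := u ^ 2 + x ^ 2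
  set L₁ := Real.log ((u + 1) ^ 2 + x ^ 2) - Real.log s
  set Lₐ := Real.log ((u + a) ^ 2 + x ^ 2) - Real.log s
  have hs : 0 < s := by positivity
  have h₁ : |L₁ - (2 * u + 1) / s| ≤ 5 / s := by
    have := abs_log_add_sq_add_sub_le hu zero_le_one hx
    norm_num at this
    exact this
  have hₐ : |Lₐ - a * (2 * u + a) / s| ≤ a ^ 2 * (4 + a ^ 2) / s :=
    abs_log_add_sq_add_sub_le hu ha hx
  have hlin : |a * (1 - a) / s| ≤ (a + a ^ 2) / s := by
    rw [abs_div, abs_of_pos hs]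
    gcongr
    rw [abs_le]; constructor <;> nlinarith
  calc |a * L₁ - Lₐ|
      = |a * (L₁ - (2 * u + 1) / s) + -(Lₐ - a * (2 * u + a) / s) + a * (1 - a) / s| := by
        congr 1; field_simp; ring
    _ ≤ a * |L₁ - (2 * u + 1) / s| + |Lₐ - a * (2 * u + a) / s| + |a * (1 - a) / s| := by
        rw [← abs_of_nonneg ha, ← abs_mul, ← abs_neg (Lₐ - _), abs_of_nonneg ha]
        exact abs_add_three _ _ _
    _ ≤ a * (5 / s) + a ^ 2 * (4 + a ^ 2) / s + (a + a ^ 2) / s := by gcongr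
    _ = (a ^ 4 + 5 * a ^ 2 + 6 * a) / s := by ring

section NatSqAdd

variable {t : ℝ}

lemma one_div_nat_sq_add_le (ht : 1 ≤ t) (j : ℕ) :
    1 / ((j : ℝ) ^ 2 + t) ≤ 2 / ((j : ℝ) + 1) ^ 2 := by
  rw [div_le_div_iff₀ (by positivity) (by positivity)]
  nlinarith [sq_nonneg ((j : ℝ) - 1)]

lemma summable_one_div_nat_sq_add (ht : 1 ≤ t) : Summable fun j : ℕ => 1 / ((j : ℝ) ^ 2 + t) := by
  have h : Summable fun j : ℕ => 2 / ((j : ℝ) + 1) ^ 2 := by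
    have := ((summable_nat_add_iff 1).2 (Real.summable_one_div_nat_pow.2 one_lt_two)).mul_left 2
    simpa [div_eq_mul_inv] using this
  exact h.of_nonneg_of_le (fun j => by positivity) (one_div_nat_sq_add_le ht)

lemma tendsto_tsum_one_div_nat_sq_add_atTop :
    Tendsto (fun t : ℝ => ∑' j : ℕ, 1 / ((j : ℝ) ^ 2 + t)) atTop (𝓝 0) := by
  have hbound : ∀ᶠ t in atTop, ∀ j : ℕ, ‖1 / ((j : ℝ) ^ 2 + t)‖ ≤ 1 / ((j : ℝ) ^ 2 + 1) := by
    filter_upwards [eventually_ge_atTop 1] with t ht j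
    rw [Real.norm_of_nonneg (one_div_nonneg.2 (add_nonneg (sq_nonneg _) (zero_le_one.trans ht)))]
    gcongr
  simpa using tendsto_tsum_of_dominated_convergence (g := fun _ => (0 : ℝ))
    (summable_one_div_nat_sq_add le_rfl)
    (fun j => tendsto_const_nhds.div_atTop (tendsto_atTop_add_const_left _ _ tendsto_id)) hbound

lemma sum_range_one_div_sq_add_le_tsum {c : ℝ} (hc : 0 ≤ c) (ht : 1 ≤ t) (n : ℕ) :
    ∑ j ∈ Finset.range n, 1 / ((c + j) ^ 2 + t) ≤ ∑' j : ℕ, 1 / ((j : ℝ) ^ 2 + t) :=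
  (Finset.sum_le_sum fun j _ => by gcongr; linarith).trans
    ((summable_one_div_nat_sq_add ht).sum_le_tsum _ fun j _ =>
      one_div_nonneg.2 (add_nonneg (sq_nonneg _) (zero_le_one.trans ht)))

end NatSqAdd

lemma Complex.log_normSq_eq_two_mul_log_norm (z : ℂ) :
    Real.log (normSq z) = 2 * Real.log ‖z‖ := by
  rw [normSq_eq_norm_sq, Real.log_pow]; norm_num

lemma Complex.normSq_ofReal_add_I_mul (c x : ℝ) : normSq ((c : ℂ) + I * x) = c ^ 2 + x ^ 2 := by
  rw [mul_comm, normSq_add_mul_I]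

lemma Complex.Gamma_ne_zero_of_im_ne_zero {s : ℂ} (hs : s.im ≠ 0) : Gamma s ≠ 0 :=
  Gamma_ne_zero fun m hm => hs (by simp [hm])

lemma two_mul_log_norm_GammaSeq {c x : ℝ} (hx : x ≠ 0) {n : ℕ} (hn : n ≠ 0) :
    2 * Real.log ‖GammaSeq ((c : ℂ) + I * x) n‖
      = 2 * c * Real.log n + 2 * Real.log n.factorial
        - ∑ j ∈ Finset.range (n + 1), Real.log ((c + j) ^ 2 + x ^ 2) := by
  have hn' : (0 : ℝ) < n := by positivity
  have hterm (j : ℕ) : normSq ((c : ℂ) + I * x + j) = (c + j) ^ 2 + x ^ 2 := by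
    rw [show (c : ℂ) + I * x + j = ((c + j : ℝ) : ℂ) + I * x by push_cast; ring]
    exact normSq_ofReal_add_I_mul _ _
  have hpow : normSq ((n : ℂ) ^ ((c : ℂ) + I * x)) = (n : ℝ) ^ c * (n : ℝ) ^ c := by
    rw [normSq_eq_norm_sq, ← ofReal_natCast, norm_cpow_eq_rpow_re_of_pos hn']
    simp [sq]
  rw [← log_normSq_eq_two_mul_log_norm, GammaSeq, map_div₀,
    map_mul, map_prod, hpow, normSq_natCast, Finset.prod_congr rfl fun j _ => hterm j,
    Real.log_div (by positivity) (Finset.prod_ne_zero_iff.2 fun j _ => by positivity),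
    Real.log_prod fun j _ => by positivity, Real.log_mul (by positivity) (by positivity),
    Real.log_mul (by positivity) (by positivity), Real.log_mul (by positivity) (by positivity),
    Real.log_rpow hn']
  ring

lemma tendsto_log_add_sq_add_sub_two_mul_log {c x : ℝ} (hx : x ≠ 0) :
    Tendsto (fun n : ℕ => Real.log ((c + n) ^ 2 + x ^ 2) - 2 * Real.log n) atTop (𝓝 0) := by
  have hinv : Tendsto (fun n : ℕ => (n : ℝ)⁻¹) atTop (𝓝 0) :=
    tendsto_inv_atTop_zero.comp tendsto_natCast_atTop_atTop
  have hquot :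
      Tendsto (fun n : ℕ => (c * (n : ℝ)⁻¹ + 1) ^ 2 + (x * (n : ℝ)⁻¹) ^ 2) atTop (𝓝 1) := by
    simpa using (((hinv.const_mul c).add_const 1).pow 2).add ((hinv.const_mul x).pow 2)
  simpa using (hquot.log one_ne_zero).congr' <| by
    filter_upwards [eventually_ne_atTop 0] with n hn
    rw [show 2 * Real.log n = Real.log ((n : ℝ) ^ 2) by rw [Real.log_pow]; norm_num,
      ← Real.log_div (by positivity) (by positivity)]
    congr 1
    field_simp

section GammaRatio

variable {a c x : ℝ}

lemma two_mul_log_norm_GammaSeq_ratio_eq (hx : x ≠ 0) {n : ℕ} (hn : n ≠ 0) :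
    2 * Real.log ‖GammaSeq ((a : ℂ) + c + I * x) n‖ - 2 * Real.log ‖GammaSeq ((c : ℂ) + I * x) n‖
        - a * Real.log (c ^ 2 + x ^ 2)
      = ∑ j ∈ Finset.range n, gammaRatioLogTerm a x (c + j)
        + (a * (2 * Real.log n - Real.log ((c + n) ^ 2 + x ^ 2))
            - (Real.log ((c + n + a) ^ 2 + x ^ 2) - Real.log ((c + n) ^ 2 + x ^ 2))) := by
  have htel : ∑ j ∈ Finset.range n,
      (Real.log ((c + j + 1) ^ 2 + x ^ 2) - Real.log ((c + j) ^ 2 + x ^ 2))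
        = Real.log ((c + n) ^ 2 + x ^ 2) - Real.log (c ^ 2 + x ^ 2) := by
    simpa [add_assoc] using Finset.sum_range_sub (fun j : ℕ => Real.log ((c + j) ^ 2 + x ^ 2)) n
  unfold gammaRatioLogTerm
  rw [show (a : ℂ) + c = ((a + c : ℝ) : ℂ) by push_cast; ring, two_mul_log_norm_GammaSeq hx hn,
    two_mul_log_norm_GammaSeq hx hn, Finset.sum_sub_distrib, ← Finset.mul_sum, htel,
    Finset.sum_range_succ, Finset.sum_range_succ, Finset.sum_sub_distrib]
  have hperm (j : ℝ) : (a + c + j) ^ 2 + x ^ 2 = (c + j + a) ^ 2 + x ^ 2 := by ring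
  simp only [hperm]
  ring

lemma abs_sum_range_gammaRatioLogTerm_le (ha : 0 ≤ a) (hc : 0 ≤ c) (hx : 1 ≤ x ^ 2) (n : ℕ) :
    |∑ j ∈ Finset.range n, gammaRatioLogTerm a x (c + j)|
      ≤ (a ^ 4 + 5 * a ^ 2 + 6 * a) * ∑' j : ℕ, 1 / ((j : ℝ) ^ 2 + x ^ 2) :=
  calc _ ≤ ∑ j ∈ Finset.range n, (a ^ 4 + 5 * a ^ 2 + 6 * a) / ((c + j) ^ 2 + x ^ 2) :=
        (Finset.abs_sum_le_sum_abs _ _).trans <|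
          Finset.sum_le_sum fun j _ => abs_gammaRatioLogTerm_le ha (by positivity) hx
    _ = (a ^ 4 + 5 * a ^ 2 + 6 * a) * ∑ j ∈ Finset.range n, 1 / ((c + j) ^ 2 + x ^ 2) := by
        simp only [Finset.mul_sum, mul_one_div]
    _ ≤ _ := by gcongr; exact sum_range_one_div_sq_add_le_tsum hc hx n

lemma abs_two_mul_log_norm_Gamma_ratio_sub_le (ha : 0 ≤ a) (hc : 0 ≤ c) (hx : 1 ≤ x ^ 2) :
    |2 * Real.log ‖Gamma ((a : ℂ) + c + I * x) / Gamma ((c : ℂ) + I * x)‖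
        - a * Real.log (c ^ 2 + x ^ 2)|
      ≤ (a ^ 4 + 5 * a ^ 2 + 6 * a) * ∑' j : ℕ, 1 / ((j : ℝ) ^ 2 + x ^ 2) := by
  have hx0 : x ≠ 0 := by rintro rfl; norm_num at hx
  have hΓ₁ : Gamma ((a : ℂ) + c + I * x) ≠ 0 := Gamma_ne_zero_of_im_ne_zero (by simpa using hx0)
  have hΓ₂ : Gamma ((c : ℂ) + I * x) ≠ 0 := Gamma_ne_zero_of_im_ne_zero (by simpa using hx0)
  have hlog {s : ℂ} (hs : Gamma s ≠ 0) :
      Tendsto (fun n => Real.log ‖GammaSeq s n‖) atTop (𝓝 (Real.log ‖Gamma s‖)) :=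
    (GammaSeq_tendsto_Gamma s).norm.log (norm_ne_zero_iff.2 hs)
  have hrem : Tendsto (fun n : ℕ => a * (2 * Real.log n - Real.log ((c + n) ^ 2 + x ^ 2))
      - (Real.log ((c + n + a) ^ 2 + x ^ 2) - Real.log ((c + n) ^ 2 + x ^ 2))) atTop (𝓝 0) := by
    have hc := tendsto_log_add_sq_add_sub_two_mul_log (c := c) hx0
    have hca := tendsto_log_add_sq_add_sub_two_mul_log (c := c + a) hx0
    simpa [add_right_comm] using (hc.neg.const_mul a).sub (hca.sub hc)
  have hsum := ((((hlog hΓ₁).const_mul 2).sub ((hlog hΓ₂).const_mul 2)).sub_const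
    (a * Real.log (c ^ 2 + x ^ 2))).sub hrem
  rw [sub_zero, ← mul_sub, ← Real.log_div (norm_ne_zero_iff.2 hΓ₁) (norm_ne_zero_iff.2 hΓ₂),
    ← norm_div] at hsum
  refine le_of_tendsto' (hsum.congr' ?_).abs (abs_sum_range_gammaRatioLogTerm_le ha hc hx)
  filter_upwards [eventually_ne_atTop 0] with n hn
  rw [two_mul_log_norm_GammaSeq_ratio_eq hx0 hn, add_sub_cancel_right]

end GammaRatio

lemma tendsto_sq_cobounded_atTop : Tendsto (fun x : ℝ => x ^ 2) (cobounded ℝ) atTop :=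
  ((tendsto_pow_atTop two_ne_zero).comp (tendsto_norm_cobounded_atTop (E := ℝ))).congr fun x => by
    simp

theorem tendsto_norm_Gamma_ratio_div_norm_rpow {a c : ℝ} (ha : 0 ≤ a) (hc : 0 ≤ c) :
    Tendsto (fun x : ℝ =>
        ‖Gamma ((a : ℂ) + c + I * x) / Gamma ((c : ℂ) + I * x)‖ / ‖(c : ℂ) + I * x‖ ^ a)
      (cobounded ℝ) (𝓝 1) := by
  set E : ℝ → ℝ := fun x => 2 * Real.log ‖Gamma ((a : ℂ) + c + I * x) / Gamma ((c : ℂ) + I * x)‖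
    - a * Real.log (c ^ 2 + x ^ 2)
  have hsq := tendsto_sq_cobounded_atTop
  have hbound := (tendsto_tsum_one_div_nat_sq_add_atTop.comp hsq).const_mul
    (a ^ 4 + 5 * a ^ 2 + 6 * a)
  rw [mul_zero] at hbound
  have hE : Tendsto E (cobounded ℝ) (𝓝 0) := by
    refine squeeze_zero_norm' ?_ hbound
    filter_upwards [hsq.eventually_ge_atTop 1] with x hx
    exact abs_two_mul_log_norm_Gamma_ratio_sub_le ha hc hx
  have hexp := (hE.div_const 2).rexp
  rw [zero_div, Real.exp_zero] at hexp
  refine hexp.congr' ?_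
  filter_upwards [hsq.eventually_ge_atTop 1] with x hx
  have hx0 : x ≠ 0 := by rintro rfl; norm_num at hx
  have hratio : 0 < ‖Gamma ((a : ℂ) + c + I * x) / Gamma ((c : ℂ) + I * x)‖ :=
    norm_pos_iff.2 (div_ne_zero (Gamma_ne_zero_of_im_ne_zero (by simpa using hx0))
      (Gamma_ne_zero_of_im_ne_zero (by simpa using hx0)))
  have hs : 0 < ‖(c : ℂ) + I * x‖ := norm_pos_iff.2 fun h => hx0 (by simpa using congrArg im h)
  rw [Real.rpow_def_of_pos hs]
  have hlog_s : Real.log (c ^ 2 + x ^ 2) = 2 * Real.log ‖(c : ℂ) + I * x‖ := by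
    rw [← normSq_ofReal_add_I_mul, log_normSq_eq_two_mul_log_norm]
  rw [eq_div_iff (Real.exp_pos _).ne', ← Real.exp_add, ← Real.exp_log hratio]
  simp only [E, hlog_s]
  ring_nf

theorem stmt1_general (a b y : ℝ) (ha : 0 ≤ a) (hb : 0 ≤ b) (hy : y ≠ 0) :
    Tendsto
      (fun β : ℝ =>
        ‖((β : ℂ) ^ (a : ℂ) *
          Complex.Gamma ((a : ℂ) + (b : ℂ) + Complex.I * (y / β : ℝ)) /
          Complex.Gamma ((b : ℂ) + Complex.I * (y / β : ℝ)))‖)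
      (nhdsWithin 0 (Set.Ioi 0)) (nhds (|y| ^ a)) := by
  have hyβ : Tendsto (fun β : ℝ => y / β) (𝓝[>] 0) (cobounded ℝ) :=
    (tendsto_mul_left_cobounded hy).comp <|
      tendsto_inv₀_nhdsNE_zero.mono_left <| nhdsWithin_mono _ fun _ hβ => ne_of_gt hβ
  have hscale : Tendsto (fun β : ℝ => ‖(β * b : ℂ) + I * y‖ ^ a) (𝓝[>] 0) (𝓝 (|y| ^ a)) := by
    have : Continuous fun β : ℝ => ‖(β * b : ℂ) + I * y‖ ^ a := by fun_prop
    simpa using (this.tendsto 0).mono_left nhdsWithin_le_nhds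
  rw [← mul_one (|y| ^ a)]
  refine (hscale.mul ((tendsto_norm_Gamma_ratio_div_norm_rpow ha hb).comp hyβ)).congr' ?_
  filter_upwards [self_mem_nhdsWithin] with β (hβ : 0 < β)
  have hs : 0 < ‖(b : ℂ) + I * (y / β : ℝ)‖ :=
    norm_pos_iff.2 fun h => div_ne_zero hy hβ.ne' (by simpa using congrArg im h)
  have hmul : (β * b : ℂ) + I * y = (β : ℂ) * ((b : ℂ) + I * (y / β : ℝ)) := by
    have : (β : ℂ) ≠ 0 := ofReal_ne_zero.2 hβ.ne'
    push_cast; field_simp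
  rw [Function.comp_apply, hmul, norm_mul, norm_real, Real.norm_of_nonneg hβ.le,
    Real.mul_rpow hβ.le hs.le, mul_div_assoc, norm_mul, norm_cpow_eq_rpow_re_of_pos hβ, ofReal_re]
  field_simp

/-- For a, b ≥ 0 with a + b > 0 and y ≠ 0, the limit as β → 0⁺ of
`|β^a · Γ(a + b + iy/β) / Γ(b + iy/β)|` equals `|y|^a`. -/
theorem stmt1 (a b y : ℝ) (ha : 0 ≤ a) (hb : 0 ≤ b) (hab : 0 < a + b) (hy : y ≠ 0) :
    Tendsto
      (fun β : ℝ =>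
        ‖((β : ℂ) ^ (a : ℂ) *
          Complex.Gamma ((a : ℂ) + (b : ℂ) + Complex.I * (y / β : ℝ)) /
          Complex.Gamma ((b : ℂ) + Complex.I * (y / β : ℝ)))‖)
      (nhdsWithin 0 (Set.Ioi 0)) (nhds (|y| ^ a)) :=
  stmt1_general a b y ha hb hy
end

section
/- For every positive integer n and real g₀ > 0, one has n! · ∏_{1 ≤ j < k ≤ n} [Γ((k−j+1)g₀)·Γ(1+(k−j−1)g₀)] / [Γ((k−j)g₀)·Γ(1+(k−j)g₀)] = Γ(1+ng₀) / Γ(1+g₀)^n. -/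
/-!
With `a d = gammaRatio g₀ d = Γ((d+1)g₀) / Γ(1+dg₀)`, the factor indexed by the gap `d = k - j ≥ 1` is
`a d / a (d-1)`, so the product over `k` telescopes to `a (n-1-j) / Γ(g₀)`. Using
`Γ(1+x) = x Γ(x)`, the remaining product over `j` becomes
`∏_{j<n} Γ(1+(j+1)g₀) / ((j+1) Γ(1+jg₀) Γ(1+g₀))`, which telescopes once more.
-/

open Real Finset Nat

theorem Finset.prod_range_div_of_ne_zero {K : Type*} [CommGroupWithZero K] (f : ℕ → K)
    (hf : ∀ i, f i ≠ 0) (n : ℕ) : ∏ i ∈ range n, f (i + 1) / f i = f n / f 0 := by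
  induction n with
  | zero => simp [hf 0]
  | succ n ih => rw [prod_range_succ, ih, mul_comm, div_mul_div_cancel₀ (hf n)]

noncomputable section

namespace GammaProduct

variable {g : ℝ}

def pairFactor (g : ℝ) (d : ℕ) : ℝ :=
  Gamma ((d + 1) * g) * Gamma (1 + (d - 1) * g) / (Gamma (d * g) * Gamma (1 + d * g))

def gammaRatio (g : ℝ) (d : ℕ) : ℝ :=
  Gamma ((d + 1) * g) / Gamma (1 + d * g)

theorem gammaRatio_pos (hg : 0 < g) (d : ℕ) : 0 < gammaRatio g d :=
  div_pos (Gamma_pos_of_pos (by positivity)) (Gamma_pos_of_pos (by positivity))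

theorem gammaRatio_zero : gammaRatio g 0 = Gamma g := by
  simp [gammaRatio]

theorem pairFactor_succ (d : ℕ) :
    pairFactor g (d + 1) = gammaRatio g (d + 1) / gammaRatio g d := by
  simp only [pairFactor, gammaRatio]
  push_cast
  rw [add_sub_cancel_right]
  simp only [div_eq_mul_inv, mul_inv, inv_inv]
  ring

theorem prod_Ioo_pairFactor (hg : 0 < g) (j n : ℕ) :
    ∏ k ∈ Ioo j n, pairFactor g (k - j) = gammaRatio g (n - 1 - j) / Gamma g := by
  rw [← Ico_add_one_left_eq_Ioo, prod_Ico_eq_prod_range, ← gammaRatio_zero,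
    show n - (j + 1) = n - 1 - j by omega,
    ← prod_range_div_of_ne_zero _ (fun d => (gammaRatio_pos hg d).ne')]
  refine prod_congr rfl fun d _ => ?_
  rw [show j + 1 + d - j = d + 1 by omega, pairFactor_succ]

theorem succ_mul_gammaRatio_div (hg : 0 < g) (d : ℕ) :
    (d + 1) * (gammaRatio g d / Gamma g) =
      Gamma (1 + (d + 1 : ℕ) * g) / Gamma (1 + d * g) / Gamma (1 + g) := by
  have hd : (0 : ℝ) < (d + 1) * g := by positivity
  have hΓg := (Gamma_pos_of_pos hg).ne'
  have hΓd := (Gamma_pos_of_pos hd).ne'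
  rw [gammaRatio, Nat.cast_succ, add_comm 1 g, Gamma_add_one hg.ne',
    add_comm 1 ((d + 1 : ℝ) * g), Gamma_add_one hd.ne']
  field_simp

theorem factorial_mul_prod_gammaRatio_div (hg : 0 < g) (n : ℕ) :
    (n ! : ℝ) * ∏ j ∈ range n, gammaRatio g j / Gamma g =
      Gamma (1 + n * g) / Gamma (1 + g) ^ n := by
  have hb : ∀ i : ℕ, Gamma (1 + i * g) ≠ 0 := fun i => (Gamma_pos_of_pos (by positivity)).ne'
  rw [← prod_range_add_one_eq_factorial, Nat.cast_prod, ← prod_mul_distrib]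
  push_cast
  simp only [succ_mul_gammaRatio_div hg]
  rw [prod_div_distrib, prod_range_div_of_ne_zero (fun i : ℕ => Gamma (1 + i * g)) hb,
    prod_const, card_range]
  simp

end GammaProduct

end

open GammaProduct in
theorem stmt2_general (n : ℕ) (g₀ : ℝ) (hg : 0 < g₀) :
    (n ! : ℝ) *
      ∏ j ∈ Finset.range n, ∏ k ∈ Finset.Ioo j n,
        (Real.Gamma ((((k - j : ℕ) : ℝ) + 1) * g₀) *
          Real.Gamma (1 + (((k - j : ℕ) : ℝ) - 1) * g₀)) /
        (Real.Gamma (((k - j : ℕ) : ℝ) * g₀) *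
          Real.Gamma (1 + ((k - j : ℕ) : ℝ) * g₀)) =
    Real.Gamma (1 + n * g₀) / (Real.Gamma (1 + g₀)) ^ n := by
  change (n ! : ℝ) * ∏ j ∈ range n, ∏ k ∈ Ioo j n, pairFactor g₀ (k - j) = _
  simp only [prod_Ioo_pairFactor hg]
  rw [prod_range_reflect (fun j => gammaRatio g₀ j / Gamma g₀) n]
  exact factorial_mul_prod_gammaRatio_div hg n

/-- The gamma-function identity
`n! · ∏_{1 ≤ j < k ≤ n} Γ((k−j+1)g₀)Γ(1+(k−j−1)g₀) / (Γ((k−j)g₀)Γ(1+(k−j)g₀))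
  = Γ(1+ng₀)/Γ(1+g₀)^n`
(here the pairs `1 ≤ j < k ≤ n` are encoded 0-based as `0 ≤ j < k < n`,
which leaves the gaps `k − j` unchanged). -/
theorem stmt2 (n : ℕ) (hn : 0 < n) (g₀ : ℝ) (hg : 0 < g₀) :
    (n ! : ℝ) *
      ∏ j ∈ Finset.range n, ∏ k ∈ Finset.Ioo j n,
        (Real.Gamma ((((k - j : ℕ) : ℝ) + 1) * g₀) *
          Real.Gamma (1 + (((k - j : ℕ) : ℝ) - 1) * g₀)) /
        (Real.Gamma (((k - j : ℕ) : ℝ) * g₀) *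
          Real.Gamma (1 + ((k - j : ℕ) : ℝ) * g₀)) =
    Real.Gamma (1 + n * g₀) / (Real.Gamma (1 + g₀)) ^ n :=
  stmt2_general n g₀ hg
end

section
/- For any positive integer n and pairwise distinct real numbers ζ₁, …, ζₙ and any real g₀ such that all denominators are nonzero, the identity ∑_{j=1}^n ∏_{k ≠ j} (1 + g₀/(ζ_j − ζ_k)) = n holds. -/
/-!
Let `p(X) = ∏ₖ (X - ζₖ + g₀)` and `q(X) = ∏ₖ (X - ζₖ)`. The difference `p - q` has degree
`< n`, its coefficient of `X^(n-1)` is `n g₀`, and at the node `ζⱼ` it takes the value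
`g₀ ∏_{k ≠ j} (ζⱼ - ζₖ + g₀)`. Reading off the `X^(n-1)` coefficient of the Lagrange
interpolation of `p - q` on the nodes `ζ` therefore gives `n g₀ = g₀ · ∑ⱼ ∏_{k ≠ j} (1 + g₀/(ζⱼ - ζₖ))`;
the case `g₀ = 0` is trivial.
-/

open Finset Polynomial Lagrange

namespace Lagrange

variable {R ι : Type*} [CommRing R] (s : Finset ι) (v : ι → R) (c : R)

theorem coeff_card_pred_nodal_sub_const_sub_nodal (hs : s.Nonempty) :
    (nodal s (v · - c) - nodal s v).coeff (#s - 1) = #s * c := by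
  rw [coeff_sub, nodal_eq, nodal_eq, prod_X_sub_C_coeff_card_pred s _ hs.card_pos,
    prod_X_sub_C_coeff_card_pred s _ hs.card_pos, sum_sub_distrib, sum_const, nsmul_eq_mul]
  ring

theorem degree_nodal_sub_const_sub_nodal_lt [Nontrivial R] :
    (nodal s (v · - c) - nodal s v).degree < #s := by
  rw [← degree_nodal (s := s) (v := (v · - c))]
  exact degree_sub_lt_left (by rw [degree_nodal, degree_nodal]) nodal_ne_zero
    (by rw [nodal_monic.leadingCoeff, nodal_monic.leadingCoeff])

theorem eval_nodal_sub_const_sub_nodal [DecidableEq ι] {i : ι} (hi : i ∈ s) :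
    (nodal s (v · - c) - nodal s v).eval (v i) = c * ∏ j ∈ s.erase i, (v i - v j + c) := by
  rw [eval_sub, eval_nodal_at_node hi, sub_zero, eval_nodal, ← mul_prod_erase s _ hi,
    sub_sub_cancel]
  congr 1
  exact prod_congr rfl fun j _ => by ring

end Lagrange

theorem Finset.sum_prod_one_add_div_sub {F ι : Type*} [Field F] [DecidableEq ι]
    {s : Finset ι} {v : ι → F} (hvs : Set.InjOn v s) (c : F) :
    ∑ i ∈ s, ∏ j ∈ s.erase i, (1 + c / (v i - v j)) = #s := by
  rcases s.eq_empty_or_nonempty with rfl | hs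
  · simp
  rcases eq_or_ne c 0 with rfl | hc
  · simp
  have hterm : ∀ i ∈ s, c * ∏ j ∈ s.erase i, (1 + c / (v i - v j)) =
      (nodal s (v · - c) - nodal s v).eval (v i) / ∏ j ∈ s.erase i, (v i - v j) := by
    intro i hi
    rw [eval_nodal_sub_const_sub_nodal s v c hi, mul_div_assoc, ← prod_div_distrib]
    refine congrArg (c * ·) (prod_congr rfl fun j hj => ?_)
    obtain ⟨hji, hj⟩ := mem_erase.mp hj
    rw [add_div, div_self (sub_ne_zero.mpr fun h => hji (hvs hi hj h).symm)]
  refine mul_left_cancel₀ hc ?_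
  calc c * ∑ i ∈ s, ∏ j ∈ s.erase i, (1 + c / (v i - v j))
      = (nodal s (v · - c) - nodal s v).coeff (#s - 1) := by
        rw [mul_sum, sum_congr rfl hterm,
          coeff_eq_sum hvs (degree_nodal_sub_const_sub_nodal_lt s v c)]
    _ = c * #s := by rw [coeff_card_pred_nodal_sub_const_sub_nodal s v c hs, mul_comm]

theorem stmt3_general (n : ℕ) (ζ : Fin n → ℝ) (g₀ : ℝ)
    (hζ : Function.Injective ζ) :
    ∑ j : Fin n, ∏ k ∈ Finset.univ.erase j, (1 + g₀ / (ζ j - ζ k)) = n := by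
  simpa using sum_prod_one_add_div_sub (s := univ) hζ.injOn g₀

/-- For pairwise distinct ζ₁,…,ζₙ, `∑_j ∏_{k ≠ j} (1 + g₀/(ζ_j − ζ_k)) = n`. -/
theorem stmt3 (n : ℕ) (hn : 0 < n) (ζ : Fin n → ℝ) (g₀ : ℝ)
    (hζ : Function.Injective ζ) :
    ∑ j : Fin n, ∏ k ∈ Finset.univ.erase j, (1 + g₀ / (ζ j - ζ k)) = n :=
  stmt3_general n ζ g₀ hζ
end

section
/- Define E_r(ζ₁,…,ζₙ; η_r,…,η_n) = ∑_{J ⊆ {1,…,n}, |J| ≤ r} (−1)^{r−|J|} (∏_{j∈J} ζ_j) · ∑_{r ≤ l₁ ≤ ⋯ ≤ l_{r−|J|} ≤ n} η_{l₁}⋯η_{l_{r−|J|}}. Then E_r(ζ₁,…,ζₙ; η_r,…,η_n) = (ζₙ − ηₙ)·(∑_{J ⊆ {1,…,n−1}, |J| ≤ r−1} (−1)^{r−1−|J|} (∏_{j∈J} ζ_j) ∑_{r ≤ l₁ ≤ ⋯ ≤ l_{r−1−|J|} ≤ n} η_{l₁}⋯η_{l_{r−1−|J|}}) + ∑_{J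 ⊆ {1,…,n−1}, |J| ≤ r} (−1)^{r−|J|} (∏_{j∈J} ζ_j) ∑_{r ≤ l₁ ≤ ⋯ ≤ l_{r−|J|} ≤ n−1} η_{l₁}⋯η_{l_{r−|J|}}. -/
open Finset

variable {R : Type*} [CommRing R]

/-- The sum `∑_{r ≤ l₁ ≤ ⋯ ≤ l_m ≤ N} η_{l₁}⋯η_{l_m}` over weakly increasing
tuples with entries in `{r,…,N}` (tuples encoded as monotone maps
`Fin m → Fin (N+1)`); for `m = 0` this equals `1`, and it equals `0` if no
such tuple exists. -/
noncomputable def etaSum (η : ℕ → R) (r N m : ℕ) : R :=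
  ∑ l ∈ Finset.univ.filter
      (fun l : Fin m → Fin (N + 1) =>
        (∀ i j : Fin m, i ≤ j → l i ≤ l j) ∧ ∀ i, r ≤ (l i : ℕ)),
    ∏ i, η (l i)

/-- `E_r(ζ₁,…,ζₙ; η_r,…,η_n)` from the paper. -/
noncomputable def Efun (ζ η : ℕ → R) (r n : ℕ) : R :=
  ∑ J ∈ (Finset.Icc 1 n).powerset.filter (fun J => J.card ≤ r),
    (-1 : R) ^ (r - J.card) * (∏ j ∈ J, ζ j) * etaSum η r n (r - J.card)

/-! `etaSum η r N m` is the complete homogeneous symmetric polynomial `h_m(η_r, …, η_N)`, so it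
satisfies `h_{m+1}(η_r, …, η_{N+1}) = η_{N+1} h_m(η_r, …, η_{N+1}) + h_{m+1}(η_r, …, η_N)`
(split the tuples according to whether their last entry is `N + 1`). Splitting the subsets
`J ⊆ {1, …, n}` of `E_r` according to whether `n ∈ J` and applying this recursion to the
terms with `n ∉ J` gives the decomposition. -/

lemma Fin.monotone_snoc {α : Type*} [Preorder α] {m : ℕ} {f : Fin m → α} (hf : Monotone f)
    {x : α} (hx : ∀ i, f i ≤ x) : Monotone (Fin.snoc f x : Fin (m + 1) → α) := by
  intro i j hij
  cases j using Fin.lastCases with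
  | last => cases i using Fin.lastCases <;> simp [hx]
  | cast j =>
    cases i using Fin.lastCases with
    | last => exact absurd hij (Fin.castSucc_lt_last j).not_ge
    | cast i => simpa using hf (Fin.castSucc_le_castSucc_iff.mp hij)

def monoTuples (r N m : ℕ) : Finset (Fin m → Fin (N + 1)) :=
  Finset.univ.filter fun l : Fin m → Fin (N + 1) =>
    (∀ i j : Fin m, i ≤ j → l i ≤ l j) ∧ ∀ i, r ≤ (l i : ℕ)

lemma mem_monoTuples {r N m : ℕ} {l : Fin m → Fin (N + 1)} :
    l ∈ monoTuples r N m ↔ Monotone l ∧ ∀ i, r ≤ (l i : ℕ) := by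
  simp [monoTuples, Monotone]

lemma etaSum_eq_sum_monoTuples (η : ℕ → R) (r N m : ℕ) :
    etaSum η r N m = ∑ l ∈ monoTuples r N m, ∏ i, η (l i) :=
  rfl

lemma etaSum_zero (η : ℕ → R) (r N : ℕ) : etaSum η r N 0 = 1 := by
  simp [etaSum]

lemma sum_monoTuples_last_eq (η : ℕ → R) {r N : ℕ} (m : ℕ) (hrN : r ≤ N + 1) :
    ∑ l ∈ (monoTuples r (N + 1) (m + 1)).filter (fun l => l (Fin.last m) = Fin.last (N + 1)),
      ∏ i, η (l i) = η (N + 1) * etaSum η r (N + 1) m := by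
  rw [etaSum_eq_sum_monoTuples, mul_sum]
  symm
  refine sum_nbij (fun l => Fin.snoc l (Fin.last (N + 1))) ?_
    (Fin.snoc_left_injective (α := fun _ => Fin (N + 2)) _).injOn ?_ ?_
  · intro l hl
    obtain ⟨hmono, hge⟩ := mem_monoTuples.mp hl
    refine mem_filter.mpr ⟨mem_monoTuples.mpr ⟨Fin.monotone_snoc hmono fun _ => Fin.le_last _,
      fun i => ?_⟩, Fin.snoc_last _ _⟩
    cases i using Fin.lastCases <;> simp [hge, hrN]
  · intro l hl
    obtain ⟨hl, hlast⟩ := mem_filter.mp hl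
    obtain ⟨hmono, hge⟩ := mem_monoTuples.mp hl
    refine ⟨Fin.init l, mem_monoTuples.mpr ⟨hmono.comp Fin.strictMono_castSucc.monotone,
      fun i => hge _⟩, ?_⟩
    rw [← hlast]
    exact Fin.snoc_init_self l
  · intro l _
    simp [Fin.prod_univ_castSucc, mul_comm]

lemma sum_monoTuples_last_ne (η : ℕ → R) (r N m : ℕ) :
    ∑ l ∈ (monoTuples r (N + 1) (m + 1)).filter (fun l => l (Fin.last m) ≠ Fin.last (N + 1)),
      ∏ i, η (l i) = etaSum η r N (m + 1) := by
  rw [etaSum_eq_sum_monoTuples]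
  symm
  refine sum_nbij (fun l => Fin.castSucc ∘ l) ?_ (Fin.castSucc_injective _).comp_left.injOn ?_ ?_
  · intro l hl
    obtain ⟨hmono, hge⟩ := mem_monoTuples.mp hl
    exact mem_filter.mpr ⟨mem_monoTuples.mpr ⟨Fin.strictMono_castSucc.monotone.comp hmono,
      fun i => by simpa using hge i⟩, (Fin.castSucc_lt_last _).ne⟩
  · intro l hl
    obtain ⟨hl, hlast⟩ := mem_filter.mp hl
    obtain ⟨hmono, hge⟩ := mem_monoTuples.mp hl
    have hne : ∀ i, l i ≠ Fin.last (N + 1) := fun i =>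
      ((hmono (Fin.le_last i)).trans_lt (Fin.lt_last_iff_ne_last.mpr hlast)).ne
    refine ⟨fun i => (l i).castPred (hne i), mem_monoTuples.mpr ⟨?_, fun i => by simpa using hge i⟩,
      funext fun i => Fin.castSucc_castPred _ _⟩
    exact fun i j hij => Fin.castPred_le_castPred_iff.mpr (hmono hij)
  · intro l _
    simp

lemma etaSum_succ_succ (η : ℕ → R) {r N : ℕ} (m : ℕ) (hrN : r ≤ N + 1) :
    etaSum η r (N + 1) (m + 1) = η (N + 1) * etaSum η r (N + 1) m + etaSum η r N (m + 1) := by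
  rw [etaSum_eq_sum_monoTuples,
    ← sum_filter_add_sum_filter_not _ (fun l => l (Fin.last m) = Fin.last (N + 1)),
    sum_monoTuples_last_eq η m hrN, sum_monoTuples_last_ne]

lemma Efun_summand_split (ζn : R) (η : ℕ → R) {r N : ℕ} (hr : 1 ≤ r) (hrN : r ≤ N + 1)
    (k : ℕ) (P : R) :
    ((if k ≤ r then (-1 : R) ^ (r - k) * P * etaSum η r (N + 1) (r - k) else 0) +
      if k + 1 ≤ r then (-1 : R) ^ (r - (k + 1)) * (ζn * P) * etaSum η r (N + 1) (r - (k + 1))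
      else 0) =
    (ζn - η (N + 1)) *
        (if k ≤ r - 1 then (-1 : R) ^ (r - 1 - k) * P * etaSum η r (N + 1) (r - 1 - k) else 0) +
      if k ≤ r then (-1 : R) ^ (r - k) * P * etaSum η r N (r - k) else 0 := by
  rcases lt_trichotomy k r with hlt | rfl | hgt
  · obtain ⟨m, hm⟩ : ∃ m, r - k = m + 1 := ⟨r - k - 1, by omega⟩
    rw [if_pos hlt.le, if_pos (Nat.succ_le_of_lt hlt), if_pos (by omega), if_pos hlt.le, hm,
      show r - (k + 1) = m by omega, show r - 1 - k = m by omega, etaSum_succ_succ η m hrN,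
      pow_succ]
    ring
  · simp [etaSum_zero, show ¬k ≤ k - 1 by omega]
  · simp [show ¬k ≤ r by omega, show ¬k + 1 ≤ r by omega, show ¬k ≤ r - 1 by omega]

/-- Decomposition of `E_r`: splitting off the variable `ζₙ` one has
`E_r(ζ;η) = (ζₙ − ηₙ)·(sum with one ζ-variable less and tuples of length
`r−1−|J|`) + (sum with tuples ranging only up to n−1)`. -/
theorem stmt4 (ζ η : ℕ → R) (r n : ℕ) (hr : 1 ≤ r) (hrn : r ≤ n) :
    Efun ζ η r n =
      (ζ n - η n) *
        (∑ J ∈ (Finset.Icc 1 (n - 1)).powerset.filter (fun J => J.card ≤ r - 1),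
          (-1 : R) ^ (r - 1 - J.card) * (∏ j ∈ J, ζ j) *
            etaSum η r n (r - 1 - J.card)) +
      ∑ J ∈ (Finset.Icc 1 (n - 1)).powerset.filter (fun J => J.card ≤ r),
        (-1 : R) ^ (r - J.card) * (∏ j ∈ J, ζ j) *
          etaSum η r (n - 1) (r - J.card) := by
  obtain ⟨N, rfl⟩ : ∃ N, n = N + 1 := ⟨n - 1, by omega⟩
  have hIcc : Icc 1 (N + 1) = insert (N + 1) (Icc 1 N) :=
    (insert_Icc_right_eq_Icc_add_one (by omega)).symm
  have hN : N + 1 ∉ Icc 1 N := by simp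
  rw [Efun, Nat.add_sub_cancel, hIcc, sum_filter, sum_filter, sum_filter, sum_powerset_insert hN,
    mul_sum, ← sum_add_distrib, ← sum_add_distrib]
  refine sum_congr rfl fun J hJ => ?_
  have hJN : N + 1 ∉ J := fun h => hN (mem_powerset.mp hJ h)
  rw [card_insert_of_notMem hJN, prod_insert hJN]
  exact Efun_summand_split (ζ (N + 1)) η hr (by omega) J.card _
end

section
/- For ω > 0, g₁ ≥ 0, and nonnegative integer λ, the polynomial p_λ^B(x) = ([g₁+1/2]_λ / (−ω)^λ) · ₁F₁(−λ; g₁+1/2; ωx²) satisfies the differential equation −p''(x) − (2g₁/x)·p'(x) + 2ωx·p'(x) = 4ωλ·p(x) for all x ≠ 0. -/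
open Finset Nat

/-- Terminating confluent hypergeometric series
`₁F₁(−l; b; z) = ∑_{m=0}^l [−l]_m z^m / ([b]_m m!)`. -/
noncomputable def oneFone (l : ℕ) (b z : ℝ) : ℝ :=
  ∑ m ∈ Finset.range (l + 1),
    (ascPochhammer ℝ m).eval (-(l : ℝ)) * z ^ m /
      ((ascPochhammer ℝ m).eval b * (m ! : ℝ))

/-- `p_l^B(x) = ([g₁+1/2]_l/(−ω)^l) ₁F₁(−l; g₁+1/2; ωx²)`. -/
noncomputable def pB (g₁ ω : ℝ) (l : ℕ) (x : ℝ) : ℝ :=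
  ((ascPochhammer ℝ l).eval (g₁ + 1 / 2) / (-ω) ^ l) *
    oneFone l (g₁ + 1 / 2) (ω * x ^ 2)

/-!
With `b = g₁ + 1/2` and `z = ωx²`, `p_λ^B(x)` is a constant multiple of `F(z)`, where
`F = ₁F₁(−λ; b; ·)` is a polynomial. The chain rule turns `−p'' − (2g₁/x) p' + 2ωx p'` into
`−4ω (z F'' + (b − z) F')`, so the claim is Kummer's equation `z F'' + (b − z) F' + λ F = 0`.
Comparing coefficients, that equation is the recurrence `(m + 1)(b + m) c_{m+1} = (m − λ) c_m`
for `c_m = [−λ]_m / ([b]_m m!)`.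
-/

open Polynomial

noncomputable def kummerCoeff (l : ℕ) (b : ℝ) (m : ℕ) : ℝ :=
  (ascPochhammer ℝ m).eval (-(l : ℝ)) / ((ascPochhammer ℝ m).eval b * (m ! : ℝ))

lemma kummerCoeff_eq_zero_of_lt {l m : ℕ} (b : ℝ) (h : l < m) : kummerCoeff l b m = 0 := by
  simp [kummerCoeff, ascPochhammer_eval_neg_coe_nat_of_lt h]

lemma kummerCoeff_succ_mul (l : ℕ) {b : ℝ} {m : ℕ} (hbm : b + m ≠ 0) :
    kummerCoeff l b (m + 1) * ((m + 1) * (b + m)) = (m - l) * kummerCoeff l b m := by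
  have he : ((m : ℝ) + 1) * (b + m) ≠ 0 := mul_ne_zero (by positivity) hbm
  simp only [kummerCoeff, ascPochhammer_succ_eval, factorial_succ, cast_mul, cast_succ]
  rw [show (ascPochhammer ℝ m).eval b * (b + m) * ((m + 1) * m !) =
      (ascPochhammer ℝ m).eval b * m ! * ((m + 1) * (b + m)) by ring,
    div_mul_eq_mul_div, mul_div_mul_right _ _ he, mul_comm, mul_div_assoc, neg_add_eq_sub]

noncomputable def kummerPoly (l : ℕ) (b : ℝ) : ℝ[X] :=
  ∑ m ∈ range (l + 1), monomial m (kummerCoeff l b m)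

lemma coeff_kummerPoly (l : ℕ) (b : ℝ) (n : ℕ) :
    (kummerPoly l b).coeff n = kummerCoeff l b n := by
  simp only [kummerPoly, finsetSum_coeff, coeff_monomial, sum_ite_eq', mem_range]
  split_ifs with h
  · rfl
  · exact (kummerCoeff_eq_zero_of_lt b (by omega)).symm

lemma oneFone_eq_eval_kummerPoly (l : ℕ) (b z : ℝ) :
    oneFone l b z = (kummerPoly l b).eval z := by
  simp only [oneFone, kummerPoly, kummerCoeff, eval_finsetSum, eval_monomial]
  exact sum_congr rfl fun m _ => by ring

lemma kummerPoly_kummer_ode (l : ℕ) {b : ℝ} (hb : ∀ m : ℕ, b + m ≠ 0) :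
    X * derivative (derivative (kummerPoly l b)) + (C b - X) * derivative (kummerPoly l b) +
      C (l : ℝ) * kummerPoly l b = 0 := by
  ext n
  have hrec := kummerCoeff_succ_mul l (hb n)
  rcases n with _ | n <;>
    simp only [coeff_add, sub_mul, coeff_sub, coeff_X_mul_zero, coeff_X_mul, coeff_C_mul,
      coeff_derivative, coeff_kummerPoly, coeff_zero] <;>
    push_cast at hrec ⊢ <;>
    linear_combination hrec

section ChainRule

variable {𝕜 : Type*} [NontriviallyNormedField 𝕜] (p : 𝕜[X]) (ω : 𝕜)

lemma hasDerivAt_eval_mul_sq (x : 𝕜) :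
    HasDerivAt (fun y => p.eval (ω * y ^ 2)) (2 * ω * x * p.derivative.eval (ω * x ^ 2)) x := by
  have := (p.hasDerivAt (ω * x ^ 2)).comp x ((hasDerivAt_pow 2 x).const_mul ω)
  exact this.congr_deriv (by norm_num; ring)

lemma deriv_eval_mul_sq :
    deriv (fun y => p.eval (ω * y ^ 2)) = fun x => 2 * ω * x * p.derivative.eval (ω * x ^ 2) :=
  funext fun x => (hasDerivAt_eval_mul_sq p ω x).deriv

lemma deriv_deriv_eval_mul_sq (x : 𝕜) :
    deriv (deriv (fun y => p.eval (ω * y ^ 2))) x =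
      2 * ω * p.derivative.eval (ω * x ^ 2) +
        (2 * ω * x) ^ 2 * p.derivative.derivative.eval (ω * x ^ 2) := by
  rw [deriv_eval_mul_sq, (((hasDerivAt_id' x).const_mul (2 * ω)).fun_mul
    (hasDerivAt_eval_mul_sq p.derivative ω x)).deriv]
  ring

end ChainRule

theorem stmt7_general (ω g₁ : ℝ) (hg : 0 ≤ g₁) (l : ℕ) (x : ℝ) (hx : x ≠ 0) :
    -(deriv (deriv (pB g₁ ω l)) x) - 2 * g₁ / x * deriv (pB g₁ ω l) x +
        2 * ω * x * deriv (pB g₁ ω l) x =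
      4 * ω * l * pB g₁ ω l x := by
  set P := kummerPoly l (g₁ + 1 / 2)
  set K := (ascPochhammer ℝ l).eval (g₁ + 1 / 2) / (-ω) ^ l
  have hpB : pB g₁ ω l = fun y => K * P.eval (ω * y ^ 2) :=
    funext fun y => by rw [pB, oneFone_eq_eval_kummerPoly]
  have hode := congrArg (eval (ω * x ^ 2))
    (kummerPoly_kummer_ode l (b := g₁ + 1 / 2) fun m => by positivity)
  simp only [eval_add, eval_mul, eval_sub, eval_X, eval_C, eval_zero] at hode
  simp only [hpB, deriv_const_mul_field']
  rw [deriv_deriv_eval_mul_sq, deriv_eval_mul_sq]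
  have hcancel : 2 * g₁ / x * (K * (2 * ω * x * P.derivative.eval (ω * x ^ 2))) =
      4 * ω * g₁ * K * P.derivative.eval (ω * x ^ 2) := by
    field_simp
    ring
  linear_combination (-4 * ω * K) * hode - hcancel

/-- The Laguerre-type differential equation
`−p'' − (2g₁/x)p' + 2ωx·p' = 4ωl·p` for `p = p_l^B`, valid for `x ≠ 0`. -/
theorem stmt7 (ω g₁ : ℝ) (hω : 0 < ω) (hg : 0 ≤ g₁) (l : ℕ) (x : ℝ) (hx : x ≠ 0) :
    -(deriv (deriv (pB g₁ ω l)) x) - 2 * g₁ / x * deriv (pB g₁ ω l) x +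
        2 * ω * x * deriv (pB g₁ ω l) x =
      4 * ω * l * pB g₁ ω l x :=
  stmt7_general ω g₁ hg l x hx
end

section
/- (Mehta integral, rank-one/known cases) For ω > 0 and g₀ = 1, one has ∫_{ℝⁿ} ∏_{1≤j<k≤n} (x_j − x_k)² · ∏_{j=1}^n e^{−ωx_j²} dx = (2π)^{n/2}/(2ω)^{n(n−1)/2 + n/2} · ∏_{j=1}^n j!. -/
open MeasureTheory Finset Nat

/-!
Replacing the rows `x ↦ x ^ i` of the Vandermonde matrix by any monic polynomials `qᵢ` of
degree `i` leaves its determinant unchanged; take for `qᵢ` the Hermite polynomials rescaled to be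
monic and orthogonal for the weight `e^{-ωt²}`. Expanding `det²` as a double sum over permutations
`σ, τ` and integrating coordinate by coordinate (Andréief's identity), orthogonality kills every
term with `σ ≠ τ`, so the integral is `n! ∏_{i<n} ‖qᵢ‖²`. With `c = √(2ω)` one has
`‖qᵢ‖² = i! √(2π) / c^{2i+1}`, because `∫ Heₘ Heₖ e^{-x²/2} = δₘₖ k! √(2π)`: by the Rodrigues formula
`Heₖ e^{-x²/2} = (-1)ᵏ (d/dx)ᵏ e^{-x²/2}`, and `k` integrations by parts turn this into
`∫ Heₘ⁽ᵏ⁾ e^{-x²/2}`, which vanishes for `m < k` and is `k! √(2π)` for `m = k`.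
-/

section Andreief

variable {α ι : Type*} [Fintype ι] [DecidableEq ι]

theorem det_sq_mul_prod_eq_sum_perm (p : ι → α → ℝ) (w : α → ℝ) (x : ι → α) :
    (Matrix.of fun i j => p i (x j)).det ^ 2 * ∏ j, w (x j) =
      ∑ σ : Equiv.Perm ι, ∑ τ : Equiv.Perm ι,
        ((Equiv.Perm.sign σ * Equiv.Perm.sign τ : ℤˣ) : ℝ) *
          ∏ j, (p (σ j) (x j) * p (τ j) (x j) * w (x j)) := by
  rw [Matrix.det_apply', sq, Finset.sum_mul_sum, Finset.sum_mul]
  refine Finset.sum_congr rfl fun σ _ => ?_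
  rw [Finset.sum_mul]
  refine Finset.sum_congr rfl fun τ _ => ?_
  simp only [Matrix.of_apply, Finset.prod_mul_distrib]
  push_cast
  ring

theorem Equiv.Perm.prod_ite_apply_eq_apply {β : Type*} [CommMonoidWithZero β]
    (σ τ : Equiv.Perm ι) (c : ι → β) :
    ∏ j, (if σ j = τ j then c (σ j) else 0) = if σ = τ then ∏ i, c i else 0 := by
  split_ifs with h
  · subst h
    simpa using Equiv.prod_comp σ c
  · obtain ⟨j, hj⟩ : ∃ j, σ j ≠ τ j := by
      by_contra! h'
      exact h (Equiv.ext h')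
    exact Finset.prod_eq_zero (Finset.mem_univ j) (if_neg hj)

variable [MeasurableSpace α] {μ : Measure α} [SigmaFinite μ]

theorem integral_det_sq_mul_prod_of_orthogonal (p : ι → α → ℝ) (w : α → ℝ) (c : ι → ℝ)
    (hint : ∀ a b, Integrable (fun t => p a t * p b t * w t) μ)
    (horth : ∀ a b, ∫ t, p a t * p b t * w t ∂μ = if a = b then c a else 0) :
    ∫ x, (Matrix.of fun i j => p i (x j)).det ^ 2 * ∏ j, w (x j) ∂(Measure.pi fun _ => μ) =
      (Fintype.card ι)! * ∏ i, c i := by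
  have hprod (σ τ : Equiv.Perm ι) : Integrable
      (fun x : ι → α => ∏ j, (p (σ j) (x j) * p (τ j) (x j) * w (x j))) (Measure.pi fun _ => μ) :=
    Integrable.fintype_prod fun j => hint (σ j) (τ j)
  have hterm (σ τ : Equiv.Perm ι) : ∫ x, ((Equiv.Perm.sign σ * Equiv.Perm.sign τ : ℤˣ) : ℝ) *
      ∏ j, (p (σ j) (x j) * p (τ j) (x j) * w (x j)) ∂(Measure.pi fun _ => μ) =
      if σ = τ then ∏ i, c i else 0 := by
    rw [integral_const_mul, integral_fintype_prod_eq_prod (fun j t => p (σ j) t * p (τ j) t * w t)]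
    simp only [horth, Equiv.Perm.prod_ite_apply_eq_apply]
    split_ifs with h
    · simp [h]
    · simp
  simp_rw [det_sq_mul_prod_eq_sum_perm]
  rw [integral_finsetSum _ fun σ _ => integrable_finsetSum _ fun τ _ => (hprod σ τ).const_mul _]
  simp_rw [integral_finsetSum _ fun τ _ => (hprod _ τ).const_mul _, hterm]
  simp [Fintype.card_perm]

end Andreief

theorem prod_Ioi_sub_sq_eq_det_sq {R : Type*} [CommRing R] {n : ℕ} (q : Fin n → Polynomial R)
    (hdeg : ∀ i, (q i).natDegree = i) (hmonic : ∀ i, (q i).Monic) (v : Fin n → R) :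
    ∏ i, ∏ j ∈ Ioi i, (v i - v j) ^ 2 = (Matrix.of fun i j => (q i).eval (v j)).det ^ 2 := by
  have htranspose : (Matrix.of fun i j => (q i).eval (v j)).det =
      (Matrix.of fun i j => (q j).eval (v i)).det := by
    rw [← Matrix.det_transpose]
    rfl
  rw [htranspose, ← Matrix.det_eval_matrixOfPolynomials_eq_det_vandermonde v q hdeg hmonic,
    Matrix.det_vandermonde, ← prod_pow]
  refine prod_congr rfl fun i _ => ?_
  rw [← prod_pow]
  exact prod_congr rfl fun j _ => by ring

section Gaussian

open Real

theorem integral_exp_neg_sq_div_two : ∫ x : ℝ, exp (-(x ^ 2 / 2)) = √(2 * π) := by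
  have h := integral_gaussian (1 / 2)
  simp_rw [show ∀ x : ℝ, -(1 / 2) * x ^ 2 = -(x ^ 2 / 2) from fun x => by ring] at h
  rw [h]
  ring_nf

theorem differentiable_iterate_deriv_gaussian (k : ℕ) :
    Differentiable ℝ (deriv^[k] fun y : ℝ => exp (-(y ^ 2 / 2))) := by
  rw [show (deriv^[k] fun y : ℝ => exp (-(y ^ 2 / 2))) = _ from
    funext fun x => Polynomial.deriv_gaussian_eq_hermite_mul_gaussian k x]
  have := (Polynomial.hermite k).differentiable_aeval (𝕜 := ℝ)
  fun_prop

end Gaussian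

namespace Polynomial

open Real

theorem integrable_eval_mul_exp_neg_mul_sq {b : ℝ} (hb : 0 < b) (P : ℝ[X]) :
    Integrable fun x : ℝ => P.eval x * exp (-b * x ^ 2) := by
  induction P using Polynomial.induction_on' with
  | add p q hp hq =>
    simp only [eval_add, add_mul]
    exact hp.add hq
  | monomial k a =>
    simpa only [eval_monomial, mul_assoc, ← rpow_natCast] using
      (integrable_rpow_mul_exp_neg_mul_sq hb (s := k)
        (by linarith [k.cast_nonneg (α := ℝ)])).const_mul a

theorem Monic.iterate_derivative_natDegree {R : Type*} [Semiring R] {P : R[X]}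
    (hP : P.Monic) : derivative^[P.natDegree] P = C (P.natDegree ! : R) := by
  have hdeg : (derivative^[P.natDegree] P).natDegree = 0 := by
    have := natDegree_iterate_derivative P P.natDegree
    omega
  rw [eq_C_of_natDegree_eq_zero hdeg, coeff_iterate_derivative, zero_add, descFactorial_self,
    hP.coeff_natDegree, nsmul_one]

theorem integrable_eval_mul_iterate_deriv_gaussian (P : ℝ[X]) (k : ℕ) :
    Integrable fun x => P.eval x * deriv^[k] (fun y : ℝ => exp (-(y ^ 2 / 2))) x := by
  have := (integrable_eval_mul_exp_neg_mul_sq (b := 1 / 2) (by norm_num)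
    (P * (hermite k).map (algebraMap ℤ ℝ))).const_mul ((-1) ^ k)
  refine this.congr (ae_of_all _ fun x => ?_)
  simp only [deriv_gaussian_eq_hermite_mul_gaussian, eval_mul, eval_map_algebraMap]
  ring_nf

theorem integral_eval_mul_iterate_deriv_gaussian (P : ℝ[X]) (k : ℕ) :
    ∫ x, P.eval x * deriv^[k] (fun y : ℝ => exp (-(y ^ 2 / 2))) x =
      (-1) ^ k * ∫ x, (derivative^[k] P).eval x * exp (-(x ^ 2 / 2)) := by
  induction k generalizing P with
  | zero => simp
  | succ k ih =>
    rw [Function.iterate_succ_apply', Function.iterate_succ_apply,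
      integral_mul_deriv_eq_deriv_mul_of_integrable
        (fun x _ => P.hasDerivAt x)
        (fun x _ => (differentiable_iterate_deriv_gaussian k x).hasDerivAt)
        (by
          have := integrable_eval_mul_iterate_deriv_gaussian P (k + 1)
          rwa [Function.iterate_succ_apply'] at this)
        (integrable_eval_mul_iterate_deriv_gaussian (derivative P) k)
        (integrable_eval_mul_iterate_deriv_gaussian P k), ih]
    ring

theorem integral_aeval_hermite_mul_aeval_hermite_mul_gaussian_of_le {m k : ℕ} (hmk : m ≤ k) :
    ∫ x, aeval x (hermite m) * aeval x (hermite k) * exp (-(x ^ 2 / 2)) =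
      if m = k then m ! * √(2 * π) else 0 := by
  have hrodrigues (x : ℝ) : aeval x (hermite m) * aeval x (hermite k) * exp (-(x ^ 2 / 2)) =
      (-1) ^ k * (((hermite m).map (algebraMap ℤ ℝ)).eval x *
        deriv^[k] (fun y : ℝ => exp (-(y ^ 2 / 2))) x) := by
    rw [deriv_gaussian_eq_hermite_mul_gaussian, eval_map_algebraMap]
    ring_nf
    simp
  simp_rw [hrodrigues, integral_const_mul, integral_eval_mul_iterate_deriv_gaussian,
    ← mul_assoc, ← pow_add, ← two_mul, pow_mul, neg_one_sq, one_pow, one_mul,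
    iterate_derivative_map]
  rcases hmk.lt_or_eq with hlt | rfl
  · rw [iterate_derivative_eq_zero (by rwa [natDegree_hermite]), if_neg hlt.ne]
    simp
  · have := (hermite_monic m).iterate_derivative_natDegree
    rw [natDegree_hermite] at this
    simp [this, integral_const_mul, integral_exp_neg_sq_div_two]

theorem integral_aeval_hermite_mul_aeval_hermite_mul_gaussian (m k : ℕ) :
    ∫ x, aeval x (hermite m) * aeval x (hermite k) * exp (-(x ^ 2 / 2)) =
      if m = k then m ! * √(2 * π) else 0 := by
  rcases le_total m k with h | h
  · exact integral_aeval_hermite_mul_aeval_hermite_mul_gaussian_of_le h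
  · simp_rw [mul_comm (aeval _ (hermite m)), eq_comm (a := m)]
    rw [integral_aeval_hermite_mul_aeval_hermite_mul_gaussian_of_le h]
    split_ifs with h' <;> simp [h']

noncomputable def scaledHermite (c : ℝ) (k : ℕ) : ℝ[X] :=
  C (c ^ k)⁻¹ * ((hermite k).map (algebraMap ℤ ℝ)).comp (C c * X)

theorem eval_scaledHermite (c t : ℝ) (k : ℕ) :
    (scaledHermite c k).eval t = (c ^ k)⁻¹ * aeval (c * t) (hermite k) := by
  simp only [scaledHermite, eval_mul, eval_C, eval_comp, eval_X, eval_map_algebraMap]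

variable {c : ℝ}

theorem natDegree_scaledHermite (hc : c ≠ 0) (k : ℕ) : (scaledHermite c k).natDegree = k := by
  rw [scaledHermite, natDegree_C_mul (by positivity), natDegree_comp, natDegree_C_mul_X _ hc,
    (hermite_monic k).natDegree_map, natDegree_hermite, mul_one]

theorem monic_scaledHermite (hc : c ≠ 0) (k : ℕ) : (scaledHermite c k).Monic := by
  have hlin : (C c * X).natDegree ≠ 0 := by rw [natDegree_C_mul_X _ hc]; exact one_ne_zero
  rw [Monic, scaledHermite, leadingCoeff_mul, leadingCoeff_C, leadingCoeff_comp hlin,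
    ((hermite_monic k).map _).leadingCoeff, leadingCoeff_C_mul_X,
    (hermite_monic k).natDegree_map, natDegree_hermite, one_mul, inv_mul_cancel₀ (by positivity)]

theorem integral_scaledHermite_mul_scaledHermite (hc : 0 < c) (a b : ℕ) :
    ∫ t, (scaledHermite c a).eval t * (scaledHermite c b).eval t * exp (-(c ^ 2 / 2) * t ^ 2) =
      if a = b then (c ^ (2 * a + 1))⁻¹ * a ! * √(2 * π) else 0 := by
  have hscale (t : ℝ) : (scaledHermite c a).eval t * (scaledHermite c b).eval t *
      exp (-(c ^ 2 / 2) * t ^ 2) = (c ^ a)⁻¹ * (c ^ b)⁻¹ *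
        (aeval (c * t) (hermite a) * aeval (c * t) (hermite b) * exp (-((c * t) ^ 2 / 2))) := by
    simp only [eval_scaledHermite]
    ring_nf
  simp_rw [hscale, integral_const_mul, Measure.integral_comp_mul_left
    (fun x => aeval x (hermite a) * aeval x (hermite b) * exp (-(x ^ 2 / 2))),
    integral_aeval_hermite_mul_aeval_hermite_mul_gaussian, abs_inv, abs_of_pos hc, smul_eq_mul]
  split_ifs with h
  · subst h
    field_simp
    ring
  · simp

end Polynomial

theorem Finset.sum_range_two_mul_add_one (n : ℕ) : ∑ i ∈ range n, (2 * i + 1) = n ^ 2 := by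
  induction n with
  | zero => rfl
  | succ n ih => rw [sum_range_succ, ih]; ring

theorem factorial_mul_prod_inv_pow_mul_factorial_eq {c : ℝ} (hc : 0 < c) (n : ℕ) :
    (n ! : ℝ) * ∏ i : Fin n, ((c ^ (2 * (i : ℕ) + 1))⁻¹ * (i : ℕ) ! * √(2 * Real.pi)) =
      (2 * Real.pi) ^ ((n : ℝ) / 2) /
          (c ^ 2) ^ ((n : ℝ) * ((n : ℝ) - 1) / 2 + (n : ℝ) / 2) *
        ∏ j ∈ Finset.Icc 1 n, (j ! : ℝ) := by
  have hexp : (n : ℝ) * ((n : ℝ) - 1) / 2 + (n : ℝ) / 2 = ((n ^ 2 : ℕ) : ℝ) / 2 := by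
    push_cast; ring
  rw [hexp, Real.rpow_div_two_eq_sqrt _ (by positivity),
    Real.rpow_div_two_eq_sqrt _ (by positivity), Real.sqrt_sq hc.le, Real.rpow_natCast,
    Real.rpow_natCast, prod_mul_distrib, prod_mul_distrib, prod_inv_distrib, prod_const,
    Finset.card_fin, prod_pow_eq_pow_sum,
    Fin.sum_univ_eq_sum_range (fun i => 2 * i + 1), sum_range_two_mul_add_one,
    Fin.prod_univ_eq_prod_range (fun i => (i ! : ℝ)), ← Nat.cast_prod, ← Nat.cast_prod,
    Nat.prod_Icc_factorial, ← Nat.prod_range_succ_factorial, prod_range_succ]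
  push_cast
  field_simp

/-- Mehta's integral for `g₀ = 1`:
`∫_{ℝⁿ} ∏_{j<k}(x_j−x_k)² ∏_j e^{−ωx_j²} dx
  = (2π)^{n/2}/(2ω)^{n(n−1)/2+n/2} ∏_{j=1}^n j!`. -/
theorem stmt10 (n : ℕ) (ω : ℝ) (hω : 0 < ω) :
    ∫ x : Fin n → ℝ,
        (∏ j : Fin n, ∏ k ∈ Finset.Ioi j, (x j - x k) ^ 2) *
          ∏ j : Fin n, Real.exp (-ω * (x j) ^ 2) =
      (2 * Real.pi) ^ ((n : ℝ) / 2) /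
          (2 * ω) ^ ((n : ℝ) * ((n : ℝ) - 1) / 2 + (n : ℝ) / 2) *
        ∏ j ∈ Finset.Icc 1 n, (j ! : ℝ) := by
  obtain ⟨c, hc, rfl⟩ : ∃ c > 0, ω = c ^ 2 / 2 :=
    ⟨√(2 * ω), by positivity, by rw [Real.sq_sqrt (by positivity)]; ring⟩
  let q (i : Fin n) : Polynomial ℝ := Polynomial.scaledHermite c i
  simp_rw [prod_Ioi_sub_sq_eq_det_sq q (fun i => Polynomial.natDegree_scaledHermite hc.ne' i)
    (fun i => Polynomial.monic_scaledHermite hc.ne' i)]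
  rw [volume_pi, integral_det_sq_mul_prod_of_orthogonal (fun i t => (q i).eval t)
      (fun t => Real.exp (-(c ^ 2 / 2) * t ^ 2)) _
      (fun a b => by simpa only [← Polynomial.eval_mul] using
        Polynomial.integrable_eval_mul_exp_neg_mul_sq (by positivity) (q a * q b))
      (fun a b => by
        simp only [q, Polynomial.integral_scaledHermite_mul_scaledHermite hc, Fin.val_inj]; rfl),
    Fintype.card_fin, factorial_mul_prod_inv_pow_mul_factorial_eq hc,
    mul_div_cancel₀ _ two_ne_zero]
end
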